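/- For each sparse subset S ⊂ [n−1] there is exactly one permutation w in the equivalence class ⟨12⋯n⟩ (the class of the identity under ∼) whose descent set D(w) equals S. Conversely, if w ∈ ⟨12⋯n⟩ then D(w) is sparse. In particular, w ↦ D(w) is a bijection from ⟨12⋯n⟩ to the sparse subsets of [n−1]. -/

import Mathlib

/-!
For a sparse `S ⊆ [n-1]` let `w_S` be the identity word `1 2 ⋯ n` with the entries `i, i + 1`
interchanged for every `i ∈ S`; sparseness makes these transpositions disjoint, so `D(w_S) = S`.
An admissible interchange at positions `i, i + 1` of `w_S` either undoes the transposition at `i`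
(if `i ∈ S`, giving `w_{S \ {i}}`), or, if `i ∉ S`, has entries differing by one exactly when
`i - 1, i + 1 ∉ S`, and then gives `w_{S ∪ {i}}`. So the words `w_S` are closed under `∼`; they
contain the identity `w_∅` and are all reached from it, hence form its class, and `D` inverts
`S ↦ w_S` there.
-/

def AdjSwap1 (u v : List ℕ) : Prop :=
  ∃ (p q : List ℕ) (x y : ℕ), ((x : ℤ) - (y : ℤ)).natAbs = 1 ∧
    u = p ++ x :: y :: q ∧ v = p ++ y :: x :: q

/-- The descent set of a word `w = a₁ a₂ ⋯ aₙ`: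
`D(w) = {i ∈ [n-1] : aᵢ > aᵢ₊₁}` (positions are 1-based). -/
def DescentSet (w : List ℕ) : Set ℕ :=
  {i : ℕ | 1 ≤ i ∧ i < w.length ∧ w.getD i 0 < w.getD (i - 1) 0}

def SparseSet (S : Set ℕ) : Prop := ∀ i ∈ S, i + 1 ∉ S

open Set

theorem List.range'_eq_append_cons_cons {s n i : ℕ} (hs : s ≤ i) (hi : i + 2 ≤ s + n) :
    range' s n = range' s (i - s) ++ i :: (i + 1) :: range' (i + 2) (s + n - (i + 2)) := by
  obtain ⟨k, rfl⟩ := Nat.exists_eq_add_of_le hs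
  obtain ⟨m, rfl⟩ := Nat.exists_eq_add_of_le (show k + 2 ≤ n by omega)
  rw [show s + (k + 2 + m) - (s + k + 2) = m by omega, Nat.add_sub_cancel_left,
    show k + 2 + m = k + (m + 1 + 1) by omega, ← range'_append, range'_succ, range'_succ]
  simp [add_assoc]

theorem List.map_range'_comp_swap {α : Type*} (f : ℕ → α) {s n i : ℕ} (hs : s ≤ i)
    (hi : i + 2 ≤ s + n) :
    (range' s n).map (f ∘ Equiv.swap i (i + 1)) = (range' s (i - s)).map f ++
      f (i + 1) :: f i :: (range' (i + 2) (s + n - (i + 2))).map f := by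
  have hfix : ∀ j ∈ range' s (i - s) ++ range' (i + 2) (s + n - (i + 2)),
      (f ∘ Equiv.swap i (i + 1)) j = f j := fun j hj => by
    simp only [mem_append, mem_range'_1] at hj
    simp [Equiv.swap_apply_of_ne_of_ne (show j ≠ i by omega) (show j ≠ i + 1 by omega)]
  rw [range'_eq_append_cons_cons hs hi, map_append, map_cons, map_cons,
    map_congr_left fun j hj => hfix j (mem_append_left _ hj),
    map_congr_left fun j hj => hfix j (mem_append_right _ hj)]
  simp

theorem AdjSwap1.symm {u v : List ℕ} (h : AdjSwap1 u v) : AdjSwap1 v u := by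
  obtain ⟨p, q, x, y, hxy, rfl, rfl⟩ := h
  exact ⟨p, q, y, x, by omega, rfl, rfl⟩

theorem adjSwap1_map_range'_iff {f : ℕ → ℕ} {s n : ℕ} {v : List ℕ} :
    AdjSwap1 ((List.range' s n).map f) v ↔ ∃ i, s ≤ i ∧ i + 2 ≤ s + n ∧
      ((f i : ℤ) - f (i + 1)).natAbs = 1 ∧
      v = (List.range' s n).map (f ∘ Equiv.swap i (i + 1)) := by
  constructor
  · rintro ⟨p, q, x, y, hxy, hu, rfl⟩
    have hlen : p.length + 2 ≤ n := by
      have := congrArg List.length hu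
      simp only [List.length_map, List.length_range', List.length_append,
        List.length_cons] at this
      omega
    refine ⟨s + p.length, by omega, by omega, ?_⟩
    rw [List.map_range'_comp_swap f (by omega) (by omega)]
    rw [List.range'_eq_append_cons_cons (i := s + p.length) (by omega) (by omega),
      List.map_append, List.map_cons, List.map_cons] at hu
    obtain ⟨hp, hxyq⟩ := List.append_inj hu.symm (by simp)
    simp only [List.cons.injEq] at hxyq
    obtain ⟨rfl, rfl, rfl⟩ := hxyq
    exact ⟨hxy, congrArg (· ++ _) hp⟩
  · rintro ⟨i, hs, hi, hdiff, rfl⟩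
    refine ⟨_, _, f i, f (i + 1), hdiff, ?_, List.map_range'_comp_swap f hs hi⟩
    rw [List.range'_eq_append_cons_cons hs hi, List.map_append, List.map_cons, List.map_cons]

theorem Relation.EqvGen.mem_iff {α : Type*} {r : α → α → Prop} {C : Set α}
    (hC : ∀ a b, r a b → (a ∈ C ↔ b ∈ C)) {a b : α} (h : EqvGen r a b) : a ∈ C ↔ b ∈ C := by
  induction h with
  | rel a b hab => exact hC a b hab
  | refl => exact Iff.rfl
  | symm _ _ _ ih => exact ih.symm
  | trans _ _ _ _ _ ih₁ ih₂ => exact ih₁.trans ih₂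

theorem SparseSet.mono {S T : Set ℕ} (hT : SparseSet T) (h : S ⊆ T) : SparseSet S :=
  fun i hi hi' => hT i (h hi) (h hi')

theorem SparseSet.insert {S : Set ℕ} (hS : SparseSet S) {i : ℕ} (hsucc : i + 1 ∉ S)
    (hpred : i - 1 ∉ S) : SparseSet (insert i S) := by
  rintro j (rfl | hj) hj'
  · rcases hj' with h | h
    · omega
    · exact hsucc h
  · rcases hj' with h | h
    · exact hpred (by rwa [← h, Nat.add_sub_cancel])
    · exact hS j hj h

def sparseSubsets (n : ℕ) : Set (Set ℕ) := {S | S ⊆ Icc 1 (n - 1) ∧ SparseSet S}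

open Classical in
/-- For sparse `S`, the product of the disjoint transpositions `(i i+1)`, `i ∈ S`. -/
noncomputable def sparseEntry (S : Set ℕ) (j : ℕ) : ℕ :=
  if j ∈ S then j + 1 else if j - 1 ∈ S then j - 1 else j

noncomputable def sparseWord (S : Set ℕ) (n : ℕ) : List ℕ :=
  (List.range' 1 n).map (sparseEntry S)

section sparseEntry

variable {S : Set ℕ} {i : ℕ}

theorem sparseEntry_comp_swap (hS : SparseSet S) (hi : i ∈ S) :
    sparseEntry S ∘ Equiv.swap i (i + 1) = sparseEntry (S \ {i}) := by
  classical
  have hsucc := hS i hi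
  have hpred : i - 1 ∈ S → i = 0 := fun h => by
    by_contra h0
    exact hS _ h (by rwa [Nat.sub_add_cancel (by omega)])
  funext j
  rcases eq_or_ne j i with rfl | hji
  · simp only [Function.comp_apply, Equiv.swap_apply_left, sparseEntry, hsucc, hi,
      Nat.add_sub_cancel, mem_sdiff, mem_singleton_iff]
    grind
  rcases eq_or_ne j (i + 1) with rfl | hji'
  · simp [sparseEntry, hi, hsucc]
  · rw [Function.comp_apply, Equiv.swap_apply_of_ne_of_ne hji hji']
    simp [sparseEntry, hji, show j - 1 ≠ i by omega]

theorem sparseEntry_insert (hi : i ∉ S) (hS : SparseSet (insert i S)) :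
    sparseEntry (insert i S) = sparseEntry S ∘ Equiv.swap i (i + 1) := by
  rw [← insert_sdiff_self_of_notMem hi, ← sparseEntry_comp_swap hS (mem_insert i S),
    insert_sdiff_self_of_notMem hi]
  funext j
  simp

theorem sparseEntry_natAbs_sub_eq_one (hi : i ∉ S)
    (h : ((sparseEntry S i : ℤ) - sparseEntry S (i + 1)).natAbs = 1) :
    i + 1 ∉ S ∧ i - 1 ∉ S := by
  simp only [sparseEntry, hi, if_false, Nat.add_sub_cancel] at h
  split_ifs at h <;> grind

theorem sparseEntry_succ_lt_iff (hS : SparseSet S) :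
    sparseEntry S (i + 1) < sparseEntry S i ↔ i ∈ S := by
  have hsucc := hS i
  simp only [sparseEntry, Nat.add_sub_cancel]
  split_ifs <;> grind

end sparseEntry

section sparseWord

variable {S : Set ℕ} {n : ℕ}

theorem sparseWord_empty (n : ℕ) : sparseWord ∅ n = List.range' 1 n := by
  have : sparseEntry ∅ = id := funext fun j => by simp [sparseEntry]
  simp [sparseWord, this]

theorem sparseWord_length : (sparseWord S n).length = n := by
  simp [sparseWord]

theorem sparseWord_getD {i : ℕ} (hi : i < n) :
    (sparseWord S n).getD i 0 = sparseEntry S (i + 1) := by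
  rw [sparseWord, List.getD_eq_getElem _ _ (by simpa using hi), List.getElem_map,
    List.getElem_range', add_comm, one_mul]

theorem descentSet_sparseWord (hS : S ∈ sparseSubsets n) : DescentSet (sparseWord S n) = S := by
  ext i
  simp only [DescentSet, mem_ofPred_eq, sparseWord_length]
  constructor
  · rintro ⟨hi₁, hi₂, hlt⟩
    rwa [sparseWord_getD hi₂, sparseWord_getD (by omega), Nat.sub_add_cancel hi₁,
      sparseEntry_succ_lt_iff hS.2] at hlt
  · intro hi
    obtain ⟨hi₁, hi₂⟩ := hS.1 hi
    refine ⟨hi₁, by omega, ?_⟩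
    rwa [sparseWord_getD (by omega), sparseWord_getD (by omega), Nat.sub_add_cancel hi₁,
      sparseEntry_succ_lt_iff hS.2]

theorem adjSwap1_sparseWord_sdiff (hS : S ∈ sparseSubsets n) {i : ℕ} (hi : i ∈ S) :
    AdjSwap1 (sparseWord S n) (sparseWord (S \ {i}) n) := by
  obtain ⟨hi₁, hi₂⟩ := hS.1 hi
  refine adjSwap1_map_range'_iff.2 ⟨i, hi₁, by omega, ?_, ?_⟩
  · simp [sparseEntry, hi, hS.2 i hi]
  · rw [sparseWord, sparseEntry_comp_swap hS.2 hi]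

theorem exists_sparseWord_of_adjSwap1 (hS : S ∈ sparseSubsets n) {v : List ℕ}
    (h : AdjSwap1 (sparseWord S n) v) : ∃ T ∈ sparseSubsets n, sparseWord T n = v := by
  obtain ⟨i, hi₁, hi₂, hdiff, rfl⟩ := adjSwap1_map_range'_iff.1 h
  by_cases hi : i ∈ S
  · exact ⟨S \ {i}, ⟨sdiff_subset.trans hS.1, hS.2.mono sdiff_subset⟩,
      by rw [sparseWord, sparseEntry_comp_swap hS.2 hi]⟩
  · obtain ⟨hsucc, hpred⟩ := sparseEntry_natAbs_sub_eq_one hi hdiff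
    have hT := hS.2.insert hsucc hpred
    exact ⟨insert i S, ⟨insert_subset ⟨hi₁, by omega⟩ hS.1, hT⟩,
      by rw [sparseWord, sparseEntry_insert hi hT]⟩

theorem eqvGen_adjSwap1_sparseWord (hS : S ∈ sparseSubsets n) :
    Relation.EqvGen AdjSwap1 (List.range' 1 n) (sparseWord S n) := by
  have hfin : S.Finite := (finite_Icc 1 (n - 1)).subset hS.1
  induction S, hfin using Set.Finite.induction_on with
  | empty => exact sparseWord_empty n ▸ .refl _
  | @insert a S ha _ ih =>
    have hS' : S ∈ sparseSubsets n :=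
      ⟨(subset_insert a S).trans hS.1, hS.2.mono (subset_insert a S)⟩
    have hstep := adjSwap1_sparseWord_sdiff hS (mem_insert a S)
    rw [insert_sdiff_self_of_notMem ha] at hstep
    exact (ih hS').trans _ _ _ (.symm _ _ (.rel _ _ hstep))

theorem setOf_eqvGen_adjSwap1_range' (n : ℕ) :
    {w | Relation.EqvGen AdjSwap1 (List.range' 1 n) w} = (sparseWord · n) '' sparseSubsets n := by
  have hclosed : ∀ u v, AdjSwap1 u v →
      u ∈ (sparseWord · n) '' sparseSubsets n → v ∈ (sparseWord · n) '' sparseSubsets n := by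
    rintro u v huv ⟨S, hS, rfl⟩
    exact exists_sparseWord_of_adjSwap1 hS huv
  ext w
  refine ⟨fun hw => ?_, fun ⟨S, hS, hw⟩ => hw ▸ eqvGen_adjSwap1_sparseWord hS⟩
  refine (Relation.EqvGen.mem_iff (fun u v huv => ?_) hw).1
    ⟨∅, ⟨empty_subset _, fun _ h => h.elim⟩, sparseWord_empty n⟩
  exact ⟨hclosed u v huv, hclosed v u huv.symm⟩

end sparseWord

theorem bijOn_descentSet (n : ℕ) :
    BijOn DescentSet {w | Relation.EqvGen AdjSwap1 (List.range' 1 n) w} (sparseSubsets n) := by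
  have hinv : LeftInvOn DescentSet (sparseWord · n) (sparseSubsets n) :=
    fun _ hS => descentSet_sparseWord hS
  rw [setOf_eqvGen_adjSwap1_range']
  exact hinv.injOn.bijOn_image.symm ⟨hinv.rightInvOn_image, hinv⟩

/-- For each sparse `S ⊆ [n-1]` there is exactly one `w` in the class `⟨1 2 ⋯ n⟩`
of the identity under `∼` with descent set `S`; conversely every `w` in this class
has sparse descent set.  In particular `w ↦ D(w)` is a bijection from `⟨1 2 ⋯ n⟩`
to the sparse subsets of `[n-1]`. -/
theorem stmt11 (n : ℕ) :
    (∀ S : Set ℕ, S ⊆ Set.Icc 1 (n - 1) → SparseSet S →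
      ∃! w : List ℕ, Relation.EqvGen AdjSwap1 (List.range' 1 n) w ∧ DescentSet w = S) ∧
    (∀ w : List ℕ, Relation.EqvGen AdjSwap1 (List.range' 1 n) w →
      SparseSet (DescentSet w)) ∧
    Set.BijOn DescentSet
      {w : List ℕ | Relation.EqvGen AdjSwap1 (List.range' 1 n) w}
      {S : Set ℕ | S ⊆ Set.Icc 1 (n - 1) ∧ SparseSet S} := by
  have hbij := bijOn_descentSet n
  refine ⟨fun S hsub hsparse => ?_, fun w hw => (hbij.mapsTo hw).2, hbij⟩
  obtain ⟨w, hw, rfl⟩ := hbij.surjOn ⟨hsub, hsparse⟩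
  exact ⟨w, ⟨hw, rfl⟩, fun w' hw' => hbij.injOn hw'.1 hw hw'.2⟩
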